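/- Let S be a 1-signature and A a set of soft S-inequations. Then the category Rep(S, A) of representations of the 2-signature (S, A) — the full subcategory of Rep^Δ(S) on those representations of S that satisfy every inequation of A — has an initial object. Its underlying monad is Σ_A, sending a set X to the set of S-terms over X equipped with the preorder ≤_A (where x ≤_A y iff i_R(x) ≤ i_R(y) for every representation R of (S, A) and i_R the initial morphism from the initial representation of S), with the representation structure inherited from the initial representation of S. -/

import Mathlib

open CategoryTheory

universe v₂ u u₂

/-- A relative monad on the functor `Δ : Set → Preord` which equips a set with the
discrete (diagonal) preorder.  Since every map out of a discretely preordered set is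
monotone, a morphism `Δ X ⟶ P Y` in `Preord` is exactly a function `X → P Y`; the
value of the substitution map is a monotone map `P X ⟶ P Y`. -/
structure RMonad : Type (u + 1) where
  obj : Type u → Type u
  ord : ∀ X : Type u, Preorder (obj X)
  unit : ∀ {X : Type u}, X → obj X
  bind : ∀ {X Y : Type u}, (X → obj Y) → obj X → obj Y
  bind_mono : ∀ {X Y : Type u} (f : X → obj Y) (a b : obj X),
      (ord X).le a b → (ord Y).le (bind f a) (bind f b)
  bind_unit : ∀ {X Y : Type u} (f : X → obj Y) (x : X), bind f (unit x) = f x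
  unit_bind : ∀ {X : Type u} (p : obj X), bind unit p = p
  bind_bind : ∀ {X Y Z : Type u} (f : X → obj Y) (g : Y → obj Z) (p : obj X),
      bind g (bind f p) = bind (fun x => bind g (f x)) p

attribute [instance] RMonad.ord

/-- The functorial action of a relative monad on `Δ`. -/
def RMonad.map (P : RMonad.{u}) {X Y : Type u} (f : X → Y) : P.obj X → P.obj Y :=
  P.bind (fun x => P.unit (f x))

/-- The shifted map: for `f : Δ V → P W`, `shift f : Δ(V + {*}) → P(W + {*})` sends
the fresh element `*` to `η(*)` and `v ∈ V` to `P(i)(f v)`, `i : W → W + {*}` being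
the inclusion. -/
def RMonad.shift (P : RMonad.{u}) {X Y : Type u} (f : X → P.obj Y) :
    Option X → P.obj (Option Y)
  | none => P.unit none
  | some x => P.map some (f x)

/-- A morphism of relative monads on `Δ`: a family of monotone maps commuting with
units and substitution. -/
structure RMonadHom (P Q : RMonad.{u}) : Type (u + 1) where
  app : ∀ X : Type u, P.obj X → Q.obj X
  mono : ∀ (X : Type u) (a b : P.obj X), a ≤ b → app X a ≤ app X b
  app_unit : ∀ {X : Type u} (x : X), app X (P.unit x) = Q.unit x
  app_bind : ∀ {X Y : Type u} (f : X → P.obj Y) (p : P.obj X),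
      app Y (P.bind f p) = Q.bind (fun x => app Y (f x)) (app X p)

/-- A module over a relative monad `P` on `Δ`, with codomain the category `PS` of
preordered sets and arbitrary (not necessarily monotone) maps: an object map sending
sets to preordered sets, together with a module substitution (a plain map) satisfying
the two module laws. -/
structure PSMod (P : RMonad.{u}) : Type (u + 1) where
  obj : Type u → Type u
  ord : ∀ X : Type u, Preorder (obj X)
  msubst : ∀ {X Y : Type u}, (X → P.obj Y) → obj X → obj Y
  msubst_unit : ∀ {X : Type u} (m : obj X), msubst (fun x : X => P.unit x) m = m
  msubst_msubst : ∀ {X Y Z : Type u} (f : X → P.obj Y) (g : Y → P.obj Z) (m : obj X),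
      msubst g (msubst f m) = msubst (fun x => P.bind g (f x)) m

attribute [instance] PSMod.ord

/-- A morphism of `P`-modules with codomain `PS`: a family of (not necessarily
monotone) maps commuting with the module substitutions. -/
structure PSModHom {P : RMonad.{u}} (M N : PSMod P) : Type (u + 1) where
  app : ∀ X : Type u, M.obj X → N.obj X
  comm : ∀ {X Y : Type u} (f : X → P.obj Y) (m : M.obj X),
      app Y (M.msubst f m) = N.msubst f (app X m)

/-- The tautological module of `P`, regarded as a module with codomain `PS`. -/
def tautPS (P : RMonad.{u}) : PSMod P :=
  ⟨P.obj, P.ord, P.bind, P.unit_bind, P.bind_bind⟩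

lemma RMonad.shift_unit (P : RMonad.{u}) (X : Type u) :
    P.shift (fun x : X => P.unit x) = fun x : Option X => P.unit x := by
  funext x
  cases x with
  | none => rfl
  | some x => simp [RMonad.shift, RMonad.map, P.bind_unit]

lemma RMonad.shift_bind (P : RMonad.{u}) {X Y Z : Type u} (f : X → P.obj Y)
    (g : Y → P.obj Z) :
    P.shift (fun x => P.bind g (f x)) = fun x => P.bind (P.shift g) (P.shift f x) := by
  funext x
  cases x with
  | none => simp [RMonad.shift, P.bind_unit]
  | some x => simp [RMonad.shift, RMonad.map, P.bind_bind, P.bind_unit]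

/-- The derived module: object map `V ↦ M (V + {*})`, with the substitution of `M`
precomposed with the shifted map. -/
def derivPS {P : RMonad.{u}} (M : PSMod P) : PSMod P where
  obj X := M.obj (Option X)
  ord X := M.ord (Option X)
  msubst f := M.msubst (P.shift f)
  msubst_unit m := by simp only [RMonad.shift_unit, M.msubst_unit]
  msubst_msubst f g m := by simp only [M.msubst_msubst, RMonad.shift_bind]

/-- The product of two `P`-modules with codomain `PS`, with componentwise
substitution and the product preorder. -/
def prodPS {P : RMonad.{u}} (M N : PSMod P) : PSMod P where
  obj X := M.obj X × N.obj X
  ord X := inferInstance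
  msubst f m := (M.msubst f m.1, N.msubst f m.2)
  msubst_unit m := by simp [M.msubst_unit, N.msubst_unit]
  msubst_msubst f g m := by simp [M.msubst_msubst, N.msubst_msubst]

/-- The pullback of a `Q`-module with codomain `PS` along a morphism of relative
monads `h : P ⟶ Q`. -/
def pbPS {P Q : RMonad.{u}} (h : RMonadHom P Q) (M : PSMod Q) : PSMod P where
  obj := M.obj
  ord := M.ord
  msubst f := M.msubst (fun x => h.app _ (f x))
  msubst_unit {X} m := by
    have e : (fun x : X => h.app X (P.unit x)) = fun x : X => Q.unit x :=
      funext fun x => h.app_unit x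
    show M.msubst (fun x : X => h.app X (P.unit x)) m = m
    rw [e, M.msubst_unit]
  msubst_msubst {X Y Z} f g m := by
    show M.msubst (fun x => h.app Z (g x)) (M.msubst (fun x => h.app Y (f x)) m)
      = M.msubst (fun x => h.app Z (P.bind g (f x))) m
    rw [M.msubst_msubst]
    congr 1
    funext x
    rw [h.app_bind]

/-- An arity is a list of natural numbers; a 1-signature is a family of arities. -/
structure Sig : Type (u + 1) where
  I : Type u
  ar : I → List ℕ

/-- Context extension: `pow n V` is `V` extended by `n` fresh variables. -/
def pow : ℕ → Type u → Type u
  | 0, V => V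
  | n + 1, V => pow n (Option V)

/-- Iterated shifting of a substitution map, for derived modules. -/
def RMonad.shiftPow (P : RMonad.{u}) :
    ∀ (n : ℕ) {X Y : Type u}, (X → P.obj Y) → (pow n X → P.obj (pow n Y))
  | 0, _, _, f => f
  | n + 1, _, _, f => P.shiftPow n (P.shift f)

/-- A representation of a 1-signature `S` in a relative monad `R` on `Δ`: for each
arity `s = [n₁, …, nₘ]` of `S`, a morphism of `R`-modules `R^s → R`, i.e.\ a family of
monotone maps commuting with the (shifted) substitutions. -/
structure SigRep (S : Sig.{u}) : Type (u + 1) where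
  R : RMonad.{u}
  rep : ∀ (i : S.I) (X : Type u),
      (∀ k : Fin (S.ar i).length, R.obj (pow ((S.ar i).get k) X)) → R.obj X
  rep_mono : ∀ (i : S.I) (X : Type u)
      (a b : ∀ k : Fin (S.ar i).length, R.obj (pow ((S.ar i).get k) X)),
      (∀ k, a k ≤ b k) → rep i X a ≤ rep i X b
  rep_hom : ∀ (i : S.I) (X Y : Type u) (f : X → R.obj Y)
      (a : ∀ k : Fin (S.ar i).length, R.obj (pow ((S.ar i).get k) X)),
      R.bind f (rep i X a)
        = rep i Y (fun k => R.bind (R.shiftPow ((S.ar i).get k) f) (a k))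

/-- A morphism of representations: a morphism of the underlying relative monads
commuting with the representation module morphisms. -/
structure SigRepHom {S : Sig.{u}} (A B : SigRep S) : Type (u + 1) where
  mh : RMonadHom A.R B.R
  mh_rep : ∀ (i : S.I) (X : Type u)
      (a : ∀ k : Fin (S.ar i).length, A.R.obj (pow ((S.ar i).get k) X)),
      mh.app X (A.rep i X a) = B.rep i X (fun k => mh.app _ (a k))

/-- The category `SigRep^Δ(S)` of representations of `S` in relative monads on `Δ`. -/
instance (S : Sig.{u}) : Category (SigRep S) where
  Hom := SigRepHom
  id A := ⟨⟨fun _ p => p, fun _ _ _ h => h, fun _ => rfl, fun _ _ => rfl⟩,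
    fun _ _ _ => rfl⟩
  comp {A B C} f g := ⟨⟨fun X p => g.mh.app X (f.mh.app X p),
      fun X a b h => g.mh.mono X _ _ (f.mh.mono X a b h),
      fun x => by simp only [f.mh.app_unit, g.mh.app_unit],
      fun k p => by simp only [f.mh.app_bind, g.mh.app_bind]⟩,
    fun i X a => by simp only [f.mh_rep, g.mh_rep]⟩
  id_comp f := rfl
  comp_id f := rfl
  assoc f g h := rfl

/-- An `S`-module: a functor from the category `Rep^Δ(S)` of representations of `S`
to the category of pairs (relative monad on `Δ`, module over it with codomain `PS`)
commuting with the forgetful functor to relative monads on `Δ`.  Concretely: each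
representation `R` is sent to an `R`-module `M R` with codomain `PS`, and each
morphism of representations `f : A ⟶ B` to a module morphism `M A → f*(M B)` over
the monad morphism `f` itself, functorially. -/
structure SMod (S : Sig.{u}) : Type (u + 1) where
  M : ∀ R : SigRep S, PSMod R.R
  Mmap : ∀ {A B : SigRep S} (f : A ⟶ B), PSModHom (M A) (pbPS f.mh (M B))
  Mmap_id : ∀ A : SigRep S, (Mmap (𝟙 A)).app = fun _ m => m
  Mmap_comp : ∀ {A B C : SigRep S} (f : A ⟶ B) (g : B ⟶ C),
      (Mmap (f ≫ g)).app = fun X m => (Mmap g).app X ((Mmap f).app X m)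

/-- A half-equation: a morphism of `S`-modules, i.e.\ a natural transformation which
becomes the identity when composed with the forgetful functor to relative monads. -/
structure HalfEq {S : Sig.{u}} (U V : SMod S) : Type (u + 1) where
  app : ∀ R : SigRep S, PSModHom (U.M R) (V.M R)
  natural : ∀ {A B : SigRep S} (f : A ⟶ B) (X : Type u) (m : (U.M A).obj X),
      (app B).app X ((U.Mmap f).app X m) = (V.Mmap f).app X ((app A).app X m)

/-- The category of `S`-modules and half-equations. -/
instance (S : Sig.{u}) : Category (SMod S) where
  Hom := HalfEq
  id U := ⟨fun R => ⟨fun _ m => m, fun _ _ => rfl⟩, fun _ _ _ => rfl⟩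
  comp {U V W} α β := ⟨fun R => ⟨fun X m => (β.app R).app X ((α.app R).app X m),
      fun f m => by simp only [(α.app _).comm, (β.app _).comm]⟩,
    fun f X m => by simp only [α.natural, β.natural] <;> rfl⟩
  id_comp f := rfl
  comp_id f := rfl
  assoc f g h := rfl

lemma RMonadHom.app_shift {P Q : RMonad.{u}} (h : RMonadHom P Q) {X Y : Type u}
    (f : X → P.obj Y) :
    (fun x => h.app (Option Y) (P.shift f x)) = Q.shift (fun x => h.app Y (f x)) := by
  funext x
  cases x with
  | none => simp [RMonad.shift, h.app_unit]
  | some x => simp [RMonad.shift, RMonad.map, h.app_bind, h.app_unit]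

/-- The tautological `S`-module `Θ : R ↦ R̂`. -/
def tautSMod (S : Sig.{u}) : SMod S where
  M R := tautPS R.R
  Mmap {_ _} f := ⟨f.mh.app, fun g m => f.mh.app_bind g m⟩
  Mmap_id _ := rfl
  Mmap_comp _ _ := rfl

/-- The derivation of an `S`-module. -/
def derivSMod {S : Sig.{u}} (U : SMod S) : SMod S where
  M R := derivPS (U.M R)
  Mmap {A B} f :=
    ⟨fun X m => (U.Mmap f).app (Option X) m, by
      intro X Y g m
      change (U.M A).obj (Option X) at m
      show (U.Mmap f).app (Option Y) ((U.M A).msubst (A.R.shift g) m)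
        = (U.M B).msubst (B.R.shift (fun x => f.mh.app Y (g x)))
            ((U.Mmap f).app (Option X) m)
      rw [(U.Mmap f).comm]
      show (U.M B).msubst (fun x => f.mh.app (Option Y) (A.R.shift g x))
            ((U.Mmap f).app (Option X) m) = _
      rw [RMonadHom.app_shift]⟩
  Mmap_id _ := by simp only [U.Mmap_id] <;> rfl
  Mmap_comp _ _ := by simp only [U.Mmap_comp] <;> rfl

/-- The product of two `S`-modules. -/
def prodSMod {S : Sig.{u}} (U V : SMod S) : SMod S where
  M R := prodPS (U.M R) (V.M R)
  Mmap {A B} f :=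
    ⟨fun X m => ((U.Mmap f).app X m.1, (V.Mmap f).app X m.2), by
      intro X Y g m
      show ((U.Mmap f).app Y ((U.M A).msubst g m.1),
            (V.Mmap f).app Y ((V.M A).msubst g m.2)) = _
      rw [(U.Mmap f).comm, (V.Mmap f).comm]
      rfl⟩
  Mmap_id _ := by
    simp only [U.Mmap_id, V.Mmap_id]
    rfl
  Mmap_comp f g := by
    simp only [U.Mmap_comp, V.Mmap_comp] <;> rfl

/-- Codes for algebraic `S`-modules: the tautological `S`-module is algebraic, and
algebraic `S`-modules are closed under derivation and binary products. -/
inductive AlgCode : Type u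
  | taut : AlgCode
  | deriv : AlgCode → AlgCode
  | prod : AlgCode → AlgCode → AlgCode

/-- The algebraic `S`-module determined by a code. -/
def algSMod (S : Sig.{u}) : AlgCode.{u} → SMod S
  | .taut => tautSMod S
  | .deriv c => derivSMod (algSMod S c)
  | .prod c d => prodSMod (algSMod S c) (algSMod S d)

/-- An `S`-inequation: a pair of parallel half-equations. -/
structure Ineq (S : Sig.{u}) : Type (u + 1) where
  dom : SMod S
  cod : SMod S
  lhs : HalfEq dom cod
  rhs : HalfEq dom cod

/-- A representation `R` of `S` satisfies the inequation `α ≤ γ : U → V` if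
`α^R_X(m) ≤ γ^R_X(m)` pointwise. -/
def satisfies {S : Sig.{u}} (R : SigRep S) (e : Ineq S) : Prop :=
  ∀ (X : Type u) (m : (e.dom.M R).obj X),
    (e.lhs.app R).app X m ≤ (e.rhs.app R).app X m

/-- The componentwise extension of a family of relations on the carriers of (the
monad underlying) a representation `R` to the carriers of an algebraic `S`-module. -/
def algRel {S : Sig.{u}} (R : SigRep S)
    (r : ∀ X : Type u, R.R.obj X → R.R.obj X → Prop) :
    ∀ (c : AlgCode.{u}) (X : Type u),
      ((algSMod S c).M R).obj X → ((algSMod S c).M R).obj X → Prop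
  | .taut, X, a, b => r X a b
  | .deriv c, X, a, b => algRel R r c (Option X) a b
  | .prod c d, X, a, b => algRel R r c X a.1 b.1 ∧ algRel R r d X a.2 b.2

/-- The relation `≤_A` on the carriers of the initial representation `Sigma0`:
`x ≤_A y` iff `i_R(x) ≤ i_R(y)` for every representation `R` of `(S, A)`, where
`i_R : Sigma0 ⟶ R` is the initial morphism. -/
def leA {S : Sig.{u}} (A : Set (Ineq S)) (Sigma0 : SigRep S)
    (hInit : Limits.IsInitial Sigma0) (X : Type u) (x y : Sigma0.R.obj X) : Prop :=
  ∀ R : SigRep S, (∀ e ∈ A, satisfies R e) →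
    (hInit.to R).mh.app X x ≤ (hInit.to R).mh.app X y

/-- Algebraic `S`-modules: generated inductively from the tautological `S`-module by
derivation and binary products. -/
inductive Algebraic {S : Sig.{u}} : SMod S → Prop
  | taut : Algebraic (tautSMod S)
  | deriv {U : SMod S} : Algebraic U → Algebraic (derivSMod U)
  | prod {U V : SMod S} : Algebraic U → Algebraic V → Algebraic (prodSMod U V)

/-- An `S`-inequation is soft if its codomain is algebraic. -/
def Soft {S : Sig.{u}} (e : Ineq S) : Prop := Algebraic e.cod

/-! The initial object is `Sigma0` itself with every preorder replaced by `≤_A`. The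
initial morphisms from `Sigma0` to the representations of `(S, A)` are monotone for `≤_A`
by its very definition, and any morphism out of the new representation is determined by
its composite with the identity-on-carriers map from `Sigma0`, hence unique. The new
representation satisfies `A` because these morphisms jointly reflect `≤_A`; this
reflection extends through derivations and products to every algebraic module, in
particular to the codomain of a soft inequation. -/

lemma RMonadHom.ext {P Q : RMonad.{u}} {f g : RMonadHom P Q} (h : f.app = g.app) :
    f = g := by
  cases f; cases g; cases h; rfl

lemma SigRepHom.ext {S : Sig.{u}} {A B : SigRep S} {f g : SigRepHom A B}
    (h : f.mh.app = g.mh.app) : f = g := by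
  cases f; cases g; cases RMonadHom.ext h; rfl

section Soft

variable {S : Sig.{u}} {Z : SigRep S} {ι : Type*} {R : ι → SigRep S} (f : ∀ i, Z ⟶ R i)

def JointlyReflectsLE : Prop :=
  ∀ (X : Type u) (a b : Z.R.obj X),
    (∀ i, (f i).mh.app X a ≤ (f i).mh.app X b) → a ≤ b

variable {f}

lemma Algebraic.le_of_forall_map_le (hf : JointlyReflectsLE f) {U : SMod S}
    (hU : Algebraic U) (X : Type u) (a b : (U.M Z).obj X)
    (h : ∀ i, (U.Mmap (f i)).app X a ≤ (U.Mmap (f i)).app X b) : a ≤ b := by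
  induction hU generalizing X with
  | taut => exact hf X a b h
  | deriv _ ih => exact ih (Option X) a b h
  | prod _ _ ih₁ ih₂ =>
    exact ⟨ih₁ X a.1 b.1 fun i => (h i).1, ih₂ X a.2 b.2 fun i => (h i).2⟩

/-- By naturality of the half-equations, `f i` maps the two sides at `Z` to the two sides
at `R i`. -/
lemma satisfies_of_jointlyReflectsLE (hf : JointlyReflectsLE f) {e : Ineq S}
    (he : Soft e) (hR : ∀ i, satisfies (R i) e) : satisfies Z e := by
  intro X m
  refine he.le_of_forall_map_le hf X _ _ fun i => ?_
  rw [← e.lhs.natural, ← e.rhs.natural]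
  exact hR i X _

end Soft

section InitialRep

variable {S : Sig.{u}} (A : Set (Ineq S)) {Sigma0 : SigRep S}
  (hInit : Limits.IsInitial Sigma0)

def leAMonad : RMonad.{u} where
  obj := Sigma0.R.obj
  ord X :=
    { le := leA A Sigma0 hInit X
      le_refl := fun _ _ _ => le_rfl
      le_trans := fun _ _ _ h₁ h₂ R hR => (h₁ R hR).trans (h₂ R hR)
      lt := fun a b => leA A Sigma0 hInit X a b ∧ ¬leA A Sigma0 hInit X b a
      lt_iff_le_not_ge := fun _ _ => Iff.rfl }
  unit := Sigma0.R.unit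
  bind := Sigma0.R.bind
  bind_mono g a b h R hR := by
    rw [(hInit.to R).mh.app_bind, (hInit.to R).mh.app_bind]
    exact R.R.bind_mono _ _ _ (h R hR)
  bind_unit := Sigma0.R.bind_unit
  unit_bind := Sigma0.R.unit_bind
  bind_bind := Sigma0.R.bind_bind

lemma leAMonad_shiftPow (n : ℕ) {X Y : Type u} (g : X → Sigma0.R.obj Y) :
    (leAMonad A hInit).shiftPow n g = Sigma0.R.shiftPow n g := by
  induction n generalizing X Y with
  | zero => rfl
  | succ n ih => exact ih _

def leARep : SigRep S where
  R := leAMonad A hInit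
  rep := Sigma0.rep
  rep_mono i X a b h R hR := by
    change ∀ k, Sigma0.R.obj _ at a b
    rw [(hInit.to R).mh_rep, (hInit.to R).mh_rep]
    exact R.rep_mono _ _ _ _ fun k => h k R hR
  rep_hom i X Y g a := by
    change X → Sigma0.R.obj Y at g
    change ∀ k, Sigma0.R.obj _ at a
    simp only [leAMonad_shiftPow]
    exact Sigma0.rep_hom i X Y g a

def leARep.lift (R : SigRep S) (hR : ∀ e ∈ A, satisfies R e) : leARep A hInit ⟶ R where
  mh :=
    { app := (hInit.to R).mh.app
      mono := fun _ _ _ h => h R hR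
      app_unit := (hInit.to R).mh.app_unit
      app_bind := (hInit.to R).mh.app_bind }
  mh_rep := (hInit.to R).mh_rep

def leARep.fromInitial : Sigma0 ⟶ leARep A hInit where
  mh :=
    { app := fun _ p => p
      mono := fun X a b h R _ => (hInit.to R).mh.mono X a b h
      app_unit := fun _ => rfl
      app_bind := fun _ _ => rfl }
  mh_rep := fun _ _ _ => rfl

lemma leARep.hom_ext {R : SigRep S} (f g : leARep A hInit ⟶ R) : f = g :=
  SigRepHom.ext <| congrArg (fun h : Sigma0 ⟶ R => h.mh.app) <|
    hInit.hom_ext (leARep.fromInitial A hInit ≫ f) (leARep.fromInitial A hInit ≫ g)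

lemma leARep_satisfies (hsoft : ∀ e ∈ A, Soft e) : ∀ e ∈ A, satisfies (leARep A hInit) e :=
  fun e he => satisfies_of_jointlyReflectsLE
    (f := fun R : {R : SigRep S // ∀ e ∈ A, satisfies R e} => leARep.lift A hInit R.1 R.2)
    (fun _ _ _ h R hR => h ⟨R, hR⟩) (hsoft e he) fun R => R.2 e he

end InitialRep

/-- Initiality for 2-signatures: for a 1-signature `S` and a set `A` of soft
`S`-inequations, the category `Rep(S, A)` of representations of `(S, A)` — the full
subcategory of `Rep^Δ(S)` on the representations satisfying every inequation of `A` —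
has an initial object.  Its underlying monad sends a set `X` to the set of `S`-terms
over `X` (the carrier of the initial representation `Sigma0` of `S`) equipped with
the preorder `≤_A`, with unit, substitution and representation structure inherited
from `Sigma0`. -/
theorem initial_representation_2sig (S : Sig.{u}) (A : Set (Ineq S))
    (hsoft : ∀ e ∈ A, Soft e) (Sigma0 : SigRep S)
    (hInit : Limits.IsInitial Sigma0) :
    ∃ Z : ObjectProperty.FullSubcategory (fun R : SigRep S => ∀ e ∈ A, satisfies R e),
      Nonempty (Limits.IsInitial Z) ∧
      Z.obj.R.obj = Sigma0.R.obj ∧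
      HEq (@RMonad.unit Z.obj.R) (@RMonad.unit Sigma0.R) ∧
      HEq (@RMonad.bind Z.obj.R) (@RMonad.bind Sigma0.R) ∧
      HEq Z.obj.rep Sigma0.rep ∧
      HEq (fun (X : Type u) (x y : Z.obj.R.obj X) => x ≤ y) (leA A Sigma0 hInit) := by
  refine ⟨⟨leARep A hInit, leARep_satisfies A hInit hsoft⟩, ⟨?_⟩,
    rfl, HEq.rfl, HEq.rfl, HEq.rfl, HEq.rfl⟩
  exact Limits.IsInitial.ofUniqueHom
    (fun R => ObjectProperty.homMk (leARep.lift A hInit R.obj R.property))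
    fun _ _ => ObjectProperty.hom_ext _ (leARep.hom_ext A hInit _ _)
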